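/- For all real d×d matrices M and N and any real p with 2 ≤ p < ∞, the inequality (1/2^{p-1})|M−N|^p ≤ (|M|^{p-2}M − |N|^{p-2}N) : (M−N) holds, where : denotes the Frobenius inner product and |·| the Frobenius norm (with the convention that |X|^{p-2}X = 0 when X = 0). -/

import Mathlib

/-- Frobenius inner product of real `d × d` matrices. -/
def frobInner {d : ℕ} (A B : Matrix (Fin d) (Fin d) ℝ) : ℝ :=
  ∑ i, ∑ j, A i j * B i j

/-- Frobenius norm of a real `d × d` matrix. -/
noncomputable def frobNorm {d : ℕ} (A : Matrix (Fin d) (Fin d) ℝ) : ℝ :=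
  Real.sqrt (frobInner A A)

/-- The power-law map `A ↦ |A|^{p-2} A`, extended by `0` at `A = 0`. -/
noncomputable def powerLaw {d : ℕ} (p : ℝ) (A : Matrix (Fin d) (Fin d) ℝ) :
    Matrix (Fin d) (Fin d) ℝ :=
  if A = 0 then 0 else (frobNorm A) ^ (p - 2) • A

/-!
With `a = ‖x‖`, `b = ‖y‖`, `c = ‖x - y‖` and `q = p - 2`, polarization gives
`⟪a^q x - b^q y, x - y⟫ = (a^q + b^q)/2 · c² + (a^q - b^q)(a² - b²)/2`.
The second term is nonnegative because `t ↦ t^q` and `t ↦ t²` are both monotone on `[0, ∞)`,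
and `c ≤ a + b ≤ 2 max a b` gives `(c/2)^q ≤ a^q + b^q`, so the first term is at least
`(c/2)^q c² / 2 = c^p / 2^(p-1)`. This holds in every real inner product space, and the
Frobenius structure on matrices is the Euclidean one on `Fin d × Fin d`.
-/

open RealInnerProductSpace

namespace Real

lemma rpow_sub_rpow_mul_sq_sub_sq_nonneg {a b q : ℝ} (ha : 0 ≤ a) (hb : 0 ≤ b) (hq : 0 ≤ q) :
    0 ≤ (a ^ q - b ^ q) * (a ^ 2 - b ^ 2) := by
  rcases le_total a b with hab | hab
  · exact mul_nonneg_of_nonpos_of_nonpos (sub_nonpos.2 (rpow_le_rpow ha hab hq))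
      (sub_nonpos.2 (pow_le_pow_left₀ ha hab 2))
  · exact mul_nonneg (sub_nonneg.2 (rpow_le_rpow hb hab hq))
      (sub_nonneg.2 (pow_le_pow_left₀ hb hab 2))

lemma div_two_rpow_le_rpow_add_rpow {a b c q : ℝ} (ha : 0 ≤ a) (hb : 0 ≤ b) (hc : 0 ≤ c)
    (hq : 0 ≤ q) (hcab : c ≤ a + b) : (c / 2) ^ q ≤ a ^ q + b ^ q := by
  have hc2 : 0 ≤ c / 2 := by positivity
  rcases le_total a b with hab | hab
  · calc (c / 2) ^ q ≤ b ^ q := rpow_le_rpow hc2 (by linarith) hq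
      _ ≤ a ^ q + b ^ q := le_add_of_nonneg_left (rpow_nonneg ha q)
  · calc (c / 2) ^ q ≤ a ^ q := rpow_le_rpow hc2 (by linarith) hq
      _ ≤ a ^ q + b ^ q := le_add_of_nonneg_right (rpow_nonneg hb q)

lemma one_div_two_rpow_mul_rpow_eq {c p : ℝ} (hc : 0 ≤ c) (hp : p ≠ 0) :
    1 / 2 ^ (p - 1) * c ^ p = (c / 2) ^ (p - 2) / 2 * c ^ 2 := by
  have hcp : c ^ p = c ^ (p - 2) * c ^ 2 := by
    rw [← rpow_two, ← rpow_add' hc (by simpa using hp), sub_add_cancel]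
  have h2p : (2 : ℝ) ^ (p - 1) = 2 * 2 ^ (p - 2) := by
    rw [show p - 1 = p - 2 + 1 by ring, rpow_add two_pos, rpow_one, mul_comm]
  rw [div_rpow hc zero_le_two, hcp, h2p]
  field_simp

end Real

section InnerProductSpace

variable {E : Type*} [NormedAddCommGroup E] [InnerProductSpace ℝ E]

lemma real_inner_smul_sub_smul_sub (α β : ℝ) (x y : E) :
    ⟪α • x - β • y, x - y⟫ =
      (α + β) / 2 * ‖x - y‖ ^ 2 + (α - β) / 2 * (‖x‖ ^ 2 - ‖y‖ ^ 2) := by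
  rw [norm_sub_sq_real, inner_sub_left, inner_sub_right, inner_sub_right, real_inner_smul_left,
    real_inner_smul_left, real_inner_smul_left, real_inner_smul_left, real_inner_self_eq_norm_sq,
    real_inner_self_eq_norm_sq, real_inner_comm y x]
  ring

theorem one_div_two_rpow_mul_norm_sub_rpow_le_inner {p : ℝ} (hp : 2 ≤ p) (x y : E) :
    1 / 2 ^ (p - 1) * ‖x - y‖ ^ p ≤ ⟪‖x‖ ^ (p - 2) • x - ‖y‖ ^ (p - 2) • y, x - y⟫ := by
  have hq : 0 ≤ p - 2 := by linarith
  have hmono := Real.rpow_sub_rpow_mul_sq_sub_sq_nonneg (norm_nonneg x) (norm_nonneg y) hq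
  have hmax := Real.div_two_rpow_le_rpow_add_rpow (norm_nonneg x) (norm_nonneg y)
    (norm_nonneg (x - y)) hq (norm_sub_le x y)
  rw [real_inner_smul_sub_smul_sub]
  calc 1 / 2 ^ (p - 1) * ‖x - y‖ ^ p = (‖x - y‖ / 2) ^ (p - 2) / 2 * ‖x - y‖ ^ 2 :=
        Real.one_div_two_rpow_mul_rpow_eq (norm_nonneg _) (by linarith)
    _ ≤ (‖x‖ ^ (p - 2) + ‖y‖ ^ (p - 2)) / 2 * ‖x - y‖ ^ 2 := by gcongr
    _ ≤ _ := le_add_of_nonneg_right (by rw [div_mul_eq_mul_div]; positivity)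

end InnerProductSpace

def frobVec {d : ℕ} : Matrix (Fin d) (Fin d) ℝ →ₗ[ℝ] EuclideanSpace ℝ (Fin d × Fin d) where
  toFun A := WithLp.toLp 2 fun ij => A ij.1 ij.2
  map_add' _ _ := rfl
  map_smul' _ _ := rfl

lemma frobInner_eq_inner {d : ℕ} (A B : Matrix (Fin d) (Fin d) ℝ) :
    frobInner A B = ⟪frobVec A, frobVec B⟫ := by
  simp only [PiLp.inner_apply, frobInner, Fintype.sum_prod_type, RCLike.inner_apply, conj_trivial,
    mul_comm]
  rfl

lemma frobNorm_eq_norm {d : ℕ} (A : Matrix (Fin d) (Fin d) ℝ) : frobNorm A = ‖frobVec A‖ := by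
  rw [frobNorm, frobInner_eq_inner, norm_eq_sqrt_real_inner]

lemma powerLaw_eq_smul {d : ℕ} (p : ℝ) (A : Matrix (Fin d) (Fin d) ℝ) :
    powerLaw p A = frobNorm A ^ (p - 2) • A := by
  unfold powerLaw
  split_ifs with h
  · rw [h, smul_zero]
  · rfl

theorem powerLaw_strong_monotone_p_ge_two {d : ℕ} (p : ℝ) (hp : 2 ≤ p)
    (M N : Matrix (Fin d) (Fin d) ℝ) :
    (1 / 2 ^ (p - 1)) * frobNorm (M - N) ^ p ≤
      frobInner (powerLaw p M - powerLaw p N) (M - N) := by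
  rw [powerLaw_eq_smul, powerLaw_eq_smul, frobInner_eq_inner, map_sub, map_sub, map_smul,
    map_smul, frobNorm_eq_norm, frobNorm_eq_norm, frobNorm_eq_norm, map_sub]
  exact one_div_two_rpow_mul_norm_sub_rpow_le_inner hp _ _
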